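/- arXiv:1206.3101 — 2 statements merged into one kernel-verified Lean document; each statement's English description precedes it below -/
import Mathlib

section
/- Let g_α be a regularization family with residual r_α(t) = 1 - t·g_α(t) satisfying 0 ≤ r_α(t) ≤ 1, the monotonicity r_α(t) ≤ r_β(t) for 0 < α ≤ β, and α·|g_α(t)| ≤ γ* for all t, α > 0. Then for 0 < α ≤ β and all t ≥ 0, one has 0 ≤ r_β(t) − r_α(t) ≤ (1 + γ*)·(t/(α+t))·r_β(t). -/
/-!
Since `r_α (1 - r_β) ≥ 0`, the gap `r_β - r_α` is at most `r_β (1 - r_α)`, and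
`1 - r_α = t g_α = (t / (α + t)) · (α g_α + t g_α) ≤ (t / (α + t)) (γ* + 1)`.
-/

lemma sub_le_mul_one_sub {R : Type*} [CommRing R] [PartialOrder R] [IsOrderedRing R]
    {a b : R} (ha : 0 ≤ a) (hb : b ≤ 1) : b - a ≤ b * (1 - a) := by
  have h := mul_nonneg ha (sub_nonneg.2 hb)
  linear_combination h

lemma mul_le_one_add_mul_div_add {α t x γ : ℝ} (hα : 0 < α) (ht : 0 ≤ t)
    (htx : t * x ≤ 1) (hαx : α * x ≤ γ) : t * x ≤ (1 + γ) * (t / (α + t)) := by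
  have hαt : 0 < α + t := by linarith
  have hsum : (α + t) * x ≤ 1 + γ := by rw [add_mul]; linarith
  calc t * x = t / (α + t) * ((α + t) * x) := by field_simp
    _ ≤ t / (α + t) * (1 + γ) := mul_le_mul_of_nonneg_left hsum (div_nonneg ht hαt.le)
    _ = (1 + γ) * (t / (α + t)) := mul_comm _ _

theorem stmt0_general (g r : ℝ → ℝ → ℝ) (γstar : ℝ)
    (hres : ∀ α t, 0 < α → 0 ≤ t → r α t = 1 - t * g α t)
    (hr01 : ∀ α t, 0 < α → 0 ≤ t → 0 ≤ r α t ∧ r α t ≤ 1)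
    (hmono : ∀ α β t, 0 < α → α ≤ β → 0 ≤ t → r α t ≤ r β t)
    (hg : ∀ α t, 0 < α → 0 ≤ t → α * |g α t| ≤ γstar) :
    ∀ α β t, 0 < α → α ≤ β → 0 ≤ t →
      0 ≤ r β t - r α t ∧
      r β t - r α t ≤ (1 + γstar) * (t / (α + t)) * r β t := by
  intro α β t hα hαβ ht
  obtain ⟨hrα0, -⟩ := hr01 α t hα ht
  obtain ⟨hrβ0, hrβ1⟩ := hr01 β t (hα.trans_le hαβ) ht
  have htg : t * g α t = 1 - r α t := by rw [hres α t hα ht]; ring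
  have hαg : α * g α t ≤ γstar :=
    (mul_le_mul_of_nonneg_left (le_abs_self _) hα.le).trans (hg α t hα ht)
  have hdecay : 1 - r α t ≤ (1 + γstar) * (t / (α + t)) :=
    htg ▸ mul_le_one_add_mul_div_add hα ht (by linarith) hαg
  refine ⟨sub_nonneg.2 (hmono α β t hα hαβ ht), ?_⟩
  calc r β t - r α t ≤ r β t * (1 - r α t) := sub_le_mul_one_sub hrα0 hrβ1
    _ ≤ r β t * ((1 + γstar) * (t / (α + t))) := mul_le_mul_of_nonneg_left hdecay hrβ0
    _ = (1 + γstar) * (t / (α + t)) * r β t := mul_comm _ _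

/-- For a monotone regularization family with residual
`r α t = 1 - t * g α t`, `0 ≤ r α t ≤ 1`, `r` monotone in `α`, and
`α * |g α t| ≤ γ*`, one has for `0 < α ≤ β` and `t ≥ 0`:
`0 ≤ r β t - r α t ≤ (1 + γ*) * (t / (α + t)) * r β t`. -/
theorem stmt0 (g r : ℝ → ℝ → ℝ) (γstar : ℝ) (hγ : 1 ≤ γstar)
    (hres : ∀ α t, 0 < α → 0 ≤ t → r α t = 1 - t * g α t)
    (hr01 : ∀ α t, 0 < α → 0 ≤ t → 0 ≤ r α t ∧ r α t ≤ 1)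
    (hmono : ∀ α β t, 0 < α → α ≤ β → 0 ≤ t → r α t ≤ r β t)
    (hg : ∀ α t, 0 < α → 0 ≤ t → α * |g α t| ≤ γstar) :
    ∀ α β t, 0 < α → α ≤ β → 0 ≤ t →
      0 ≤ r β t - r α t ∧
      r β t - r α t ≤ (1 + γstar) * (t / (α + t)) * r β t :=
  stmt0_general g r γstar hres hr01 hmono hg
end

section
/- Suppose the self-similarity assumption holds: there exist c₁ > 1, 0 < c₂ < 1, 0 < t₀ < ‖A‖ such that ∫₀^α d‖E_t(x†−x₀)‖² ≤ c₁² ∫_{c₂α}^∞ r_α²(t) d‖E_t(x†−x₀)‖² for all 0 < α ≤ t₀. Then there is a constant C < ∞ such that for all 0 < α ≤ α₀: ‖A^{1/2} s_α(A)^{1/2} r_α(A)(x†−x₀)‖ ≤ (C/√α)·‖s_α(A) r_α(A) A (x†−x₀)‖. -/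
/-!
Put `β = min α t₀`, `s = c₂ β` and `K = 1 + (1 + α₀ / t₀) / c₂`, so that `t + α ≤ K t` for `t ≥ s`.
Above `s` the integrand `t s_α(t) r_α(t)²` is at most `K / α` times `(s_α(t) r_α(t) t)²`.
Below `s` it is at most `α`, so that part of the integral is at most `α ν[0, β]`; self-similarity
bounds `ν[0, β]` by `c₁² ∫_{t ≥ s} r_β²`, and `r_β ≤ r_α` together with `t + α ≤ K t` gives
`r_β(t)² ≤ (K / α)² (s_α(t) r_α(t) t)²` there.
-/

open MeasureTheory Set

section Pointwise

variable {α t K : ℝ}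

lemma mul_div_add_le (hα : 0 < α) (ht : 0 ≤ t) : t * (α / (t + α)) ≤ α := by
  rw [mul_div_left_comm]
  exact mul_le_of_le_one_right hα.le (div_le_one_of_le₀ (by linarith) (by linarith))

lemma one_le_mul_div_add (hα : 0 < α) (ht : 0 ≤ t) (hK : t + α ≤ K * t) :
    1 ≤ K * t / (t + α) :=
  (one_le_div (by linarith)).2 hK

lemma mul_div_add_mul_sq_le (hα : 0 < α) (ht : 0 ≤ t) (hK : t + α ≤ K * t) (ρ : ℝ) :
    t * (α / (t + α)) * ρ ^ 2 ≤ K / α * (α / (t + α) * ρ * t) ^ 2 := by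
  have htα : t + α ≠ 0 := by linarith
  have key : K / α * (α / (t + α) * ρ * t) ^ 2 =
      K * t / (t + α) * (t * (α / (t + α)) * ρ ^ 2) := by
    field_simp
  rw [key]
  exact le_mul_of_one_le_left (by positivity) (one_le_mul_div_add hα ht hK)

lemma sq_le_mul_div_add_mul_sq (hα : 0 < α) (ht : 0 ≤ t) (hK : t + α ≤ K * t) {ρ ρ' : ℝ}
    (hρ' : ρ' ^ 2 ≤ ρ ^ 2) : ρ' ^ 2 ≤ K ^ 2 / α ^ 2 * (α / (t + α) * ρ * t) ^ 2 := by
  have htα : t + α ≠ 0 := by linarith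
  have key : K ^ 2 / α ^ 2 * (α / (t + α) * ρ * t) ^ 2 = (K * t / (t + α)) ^ 2 * ρ ^ 2 := by
    field_simp
  rw [key]
  exact hρ'.trans (le_mul_of_one_le_left (sq_nonneg _) (one_le_pow₀ (one_le_mul_div_add hα ht hK)))

lemma pos_and_one_lt_of_add_le_mul {s : ℝ} (hα : 0 < α)
    (hK : ∀ t, s ≤ t → t + α ≤ K * t) : 0 < s ∧ 1 < K := by
  have hs : 0 < s := by
    by_contra! hs
    linarith [hK 0 hs]
  have := hK s le_rfl
  exact ⟨hs, by nlinarith⟩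

lemma add_le_mul_of_mul_min_le {α₀ t₀ c₂ : ℝ} (hα : 0 < α) (hαα₀ : α ≤ α₀) (ht₀ : 0 < t₀)
    (hc₂ : 0 < c₂) (ht : c₂ * min α t₀ ≤ t) : t + α ≤ (1 + (1 + α₀ / t₀) / c₂) * t := by
  have hq : 0 ≤ α₀ / t₀ := div_nonneg (by linarith) ht₀.le
  have hmin : α ≤ (1 + α₀ / t₀) * min α t₀ := by
    rcases le_total α t₀ with h | h
    · rw [min_eq_left h]
      nlinarith
    · rw [min_eq_right h, add_mul, one_mul, div_mul_cancel₀ _ ht₀.ne']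
      linarith
  have : (1 + α₀ / t₀) * min α t₀ ≤ (1 + α₀ / t₀) / c₂ * t := by
    rw [div_mul_eq_mul_div, le_div_iff₀ hc₂]
    nlinarith
  linarith

end Pointwise

section Integral

variable {ν : Measure ℝ} {α s K : ℝ} {ρ : ℝ → ℝ}

lemma integrable_filter_mul_sq (hν : ∀ᵐ t ∂ν, 0 ≤ t) (hα : 0 < α)
    (hF : Integrable (fun t ↦ t * (α / (t + α)) * ρ t ^ 2) ν) :
    Integrable (fun t ↦ (α / (t + α) * ρ t * t) ^ 2) ν := by
  have hfac : (fun t ↦ (α / (t + α) * ρ t * t) ^ 2) =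
      fun t ↦ t * (α / (t + α)) * (t * (α / (t + α)) * ρ t ^ 2) := by
    funext t
    ring
  rw [hfac]
  refine hF.bdd_mul (c := α) (by fun_prop) ?_
  filter_upwards [hν] with t ht
  rw [Real.norm_of_nonneg (by positivity)]
  exact mul_div_add_le hα ht

lemma setIntegral_Iio_filter_le [IsFiniteMeasure ν] (hν : ∀ᵐ t ∂ν, 0 ≤ t) (hα : 0 < α)
    (hρ : ∀ t, 0 ≤ t → ρ t ^ 2 ≤ 1) :
    ∫ t in Iio s, t * (α / (t + α)) * ρ t ^ 2 ∂ν ≤ α * (ν (Iio s)).toReal := by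
  calc ∫ t in Iio s, t * (α / (t + α)) * ρ t ^ 2 ∂ν ≤ ∫ _ in Iio s, α ∂ν := by
        refine integral_mono_of_nonneg ?_ (integrable_const α) ?_ <;>
          filter_upwards [ae_restrict_of_ae hν] with t ht
        · positivity
        · exact (mul_le_of_le_one_right (by positivity) (hρ t ht)).trans (mul_div_add_le hα ht)
    _ = α * (ν (Iio s)).toReal := by
        rw [setIntegral_const, smul_eq_mul, mul_comm, measureReal_def]

lemma setIntegral_Ici_filter_le (hν : ∀ᵐ t ∂ν, 0 ≤ t) (hα : 0 < α)
    (hK : ∀ t, s ≤ t → t + α ≤ K * t)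
    (hF : Integrable (fun t ↦ t * (α / (t + α)) * ρ t ^ 2) ν) :
    ∫ t in Ici s, t * (α / (t + α)) * ρ t ^ 2 ∂ν ≤
      K / α * ∫ t, (α / (t + α) * ρ t * t) ^ 2 ∂ν := by
  have hK0 : 0 ≤ K / α := div_nonneg (zero_lt_one.trans (pos_and_one_lt_of_add_le_mul hα hK).2).le hα.le
  rw [← integral_const_mul]
  refine (integral_mono_ae hF.restrict
    ((integrable_filter_mul_sq hν hα hF).const_mul _).restrict ?_).trans
    (setIntegral_le_integral ((integrable_filter_mul_sq hν hα hF).const_mul _)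
      (Filter.Eventually.of_forall fun t ↦ by positivity))
  filter_upwards [ae_restrict_of_ae hν, ae_restrict_mem measurableSet_Ici] with t ht hts
  exact mul_div_add_mul_sq_le hα ht (hK t hts) (ρ t)


lemma setIntegral_Ici_sq_le {ρ' : ℝ → ℝ} (hν : ∀ᵐ t ∂ν, 0 ≤ t) (hα : 0 < α)
    (hK : ∀ t, s ≤ t → t + α ≤ K * t) (hρ' : ∀ t, s ≤ t → ρ' t ^ 2 ≤ ρ t ^ 2)
    (hF : Integrable (fun t ↦ t * (α / (t + α)) * ρ t ^ 2) ν) :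
    ∫ t in Ici s, ρ' t ^ 2 ∂ν ≤ K ^ 2 / α ^ 2 * ∫ t, (α / (t + α) * ρ t * t) ^ 2 ∂ν := by
  rw [← integral_indicator measurableSet_Ici, ← integral_const_mul]
  refine integral_mono_of_nonneg (Filter.Eventually.of_forall fun t ↦
    indicator_nonneg (fun _ _ ↦ sq_nonneg _) t) ((integrable_filter_mul_sq hν hα hF).const_mul _) ?_
  filter_upwards [hν] with t ht
  by_cases hts : t ∈ Ici s
  · rw [indicator_of_mem hts]
    exact sq_le_mul_div_add_mul_sq hα ht (hK t hts) (hρ' t hts)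
  · rw [indicator_of_notMem hts]
    positivity

theorem integral_filter_le_of_head_le [IsFiniteMeasure ν] (hν : ∀ᵐ t ∂ν, 0 ≤ t) (hα : 0 < α)
    (hK : ∀ t, s ≤ t → t + α ≤ K * t) (hρ : ∀ t, 0 ≤ t → ρ t ^ 2 ≤ 1) {ρ' : ℝ → ℝ}
    (hρ' : ∀ t, s ≤ t → ρ' t ^ 2 ≤ ρ t ^ 2) {c : ℝ} (hc : 0 ≤ c)
    (hhead : (ν (Iio s)).toReal ≤ c * ∫ t in Ici s, ρ' t ^ 2 ∂ν) :
    ∫ t, t * (α / (t + α)) * ρ t ^ 2 ∂ν ≤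
      (K + c * K ^ 2) / α * ∫ t, (α / (t + α) * ρ t * t) ^ 2 ∂ν := by
  have hK1 := (pos_and_one_lt_of_add_le_mul hα hK).2
  have hG : 0 ≤ ∫ t, (α / (t + α) * ρ t * t) ^ 2 ∂ν := integral_nonneg fun _ ↦ sq_nonneg _
  by_cases hF : Integrable (fun t ↦ t * (α / (t + α)) * ρ t ^ 2) ν
  swap
  · rw [integral_undef hF]
    have : 0 ≤ K + c * K ^ 2 := by positivity
    positivity
  have head := calc
    ∫ t in Iio s, t * (α / (t + α)) * ρ t ^ 2 ∂ν ≤ α * (ν (Iio s)).toReal :=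
      setIntegral_Iio_filter_le hν hα hρ
    _ ≤ α * (c * ∫ t in Ici s, ρ' t ^ 2 ∂ν) := by gcongr
    _ ≤ α * (c * (K ^ 2 / α ^ 2 * ∫ t, (α / (t + α) * ρ t * t) ^ 2 ∂ν)) := by
      gcongr
      exact setIntegral_Ici_sq_le hν hα hK hρ' hF
  have tail := setIntegral_Ici_filter_le hν hα hK hF
  rw [← integral_add_compl measurableSet_Iio hF, compl_Iio]
  have split : (K + c * K ^ 2) / α * ∫ t, (α / (t + α) * ρ t * t) ^ 2 ∂ν =
      α * (c * (K ^ 2 / α ^ 2 * ∫ t, (α / (t + α) * ρ t * t) ^ 2 ∂ν)) +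
        K / α * ∫ t, (α / (t + α) * ρ t * t) ^ 2 ∂ν := by
    field_simp
    ring
  rw [split]
  exact add_le_add head tail

end Integral

theorem stmt8_general (ν : Measure ℝ) [IsFiniteMeasure ν] (hsupp : ν (Set.Iio 0) = 0)
    (r : ℝ → ℝ → ℝ)
    (hr01 : ∀ α t, 0 < α → 0 ≤ t → 0 ≤ r α t ∧ r α t ≤ 1)
    (hrmono : ∀ α β t, 0 < α → α ≤ β → 0 ≤ t → r α t ≤ r β t)
    (c₁ c₂ t₀ α₀ : ℝ) (hc₂0 : 0 < c₂) (hc₂1 : c₂ < 1)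
    (ht₀ : 0 < t₀) (hα₀ : 0 < α₀)
    -- self-similarity of `x† - x₀` relative to `A`
    (hKN : ∀ α, 0 < α → α ≤ t₀ →
      (ν (Set.Iic α)).toReal ≤
        c₁ ^ 2 * ∫ t in Set.Ici (c₂ * α), (r α t) ^ 2 ∂ν) :
    ∃ C : ℝ, 0 < C ∧ ∀ α, 0 < α → α ≤ α₀ →
      Real.sqrt (∫ t, t * (α / (t + α)) * (r α t) ^ 2 ∂ν) ≤
        (C / Real.sqrt α) *
          Real.sqrt (∫ t, ((α / (t + α)) * r α t * t) ^ 2 ∂ν) := by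
  have hν : ∀ᵐ t ∂ν, 0 ≤ t := ae_iff.2 (by simp only [not_le]; exact hsupp)
  set K := 1 + (1 + α₀ / t₀) / c₂
  set D := K + c₁ ^ 2 * K ^ 2
  have hD : 0 < D := by positivity
  refine ⟨√D, Real.sqrt_pos.2 hD, fun α hα hαα₀ ↦ ?_⟩
  have hβ : 0 < min α t₀ := lt_min hα ht₀
  have hs : c₂ * min α t₀ ≤ min α t₀ := mul_le_of_le_one_left hβ.le hc₂1.le
  have hpos {t : ℝ} (ht : c₂ * min α t₀ ≤ t) : 0 ≤ t := (mul_pos hc₂0 hβ).le.trans ht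
  have hmain := integral_filter_le_of_head_le hν hα
    (fun t ht ↦ add_le_mul_of_mul_min_le hα hαα₀ ht₀ hc₂0 ht)
    (fun t ht ↦ pow_le_one₀ (hr01 α t hα ht).1 (hr01 α t hα ht).2)
    (fun t ht ↦ pow_le_pow_left₀ (hr01 _ t hβ (hpos ht)).1
      (hrmono _ α t hβ (min_le_left _ _) (hpos ht)) 2) (sq_nonneg c₁)
    ((ENNReal.toReal_mono (measure_ne_top ν _) (measure_mono
      (Iio_subset_Iic_self.trans (Iic_subset_Iic.2 hs)))).trans
      (hKN _ hβ (min_le_right _ _)))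
  calc √(∫ t, t * (α / (t + α)) * r α t ^ 2 ∂ν)
      ≤ √(D / α * ∫ t, (α / (t + α) * r α t * t) ^ 2 ∂ν) := Real.sqrt_le_sqrt hmain
    _ = √D / √α * √(∫ t, (α / (t + α) * r α t * t) ^ 2 ∂ν) := by
      rw [Real.sqrt_mul (by positivity), Real.sqrt_div hD.le]

/-- spectral form.  `ν` is the spectral measure of `x† - x₀`
for the compact nonnegative self-adjoint operator `A`, so
`∫₀^α d‖E_t(x†-x₀)‖² = ν [0,α]`,
`‖A^{1/2} s_α(A)^{1/2} r_α(A)(x†-x₀)‖² = ∫ t s_α(t) r_α(t)² dν` and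
`‖s_α(A) r_α(A) A (x†-x₀)‖² = ∫ (s_α(t) r_α(t) t)² dν`.  Under the
self-similarity assumption there is `C < ∞` with, for all `0 < α ≤ α₀`,
`‖A^{1/2} s_α(A)^{1/2} r_α(A)(x†-x₀)‖ ≤ (C/√α) ‖s_α(A) r_α(A) A (x†-x₀)‖`. -/
theorem stmt8 (ν : Measure ℝ) [IsFiniteMeasure ν] (hsupp : ν (Set.Iio 0) = 0)
    (g r : ℝ → ℝ → ℝ) (γstar : ℝ) (hγ : 1 ≤ γstar)
    (hres : ∀ α t, 0 < α → 0 ≤ t → r α t = 1 - t * g α t)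
    (hr01 : ∀ α t, 0 < α → 0 ≤ t → 0 ≤ r α t ∧ r α t ≤ 1)
    (hrmono : ∀ α β t, 0 < α → α ≤ β → 0 ≤ t → r α t ≤ r β t)
    (c₁ c₂ t₀ α₀ : ℝ) (hc₁ : 1 < c₁) (hc₂0 : 0 < c₂) (hc₂1 : c₂ < 1)
    (ht₀ : 0 < t₀) (hα₀ : 0 < α₀)
    -- self-similarity of `x† - x₀` relative to `A`
    (hKN : ∀ α, 0 < α → α ≤ t₀ →
      (ν (Set.Iic α)).toReal ≤
        c₁ ^ 2 * ∫ t in Set.Ici (c₂ * α), (r α t) ^ 2 ∂ν) :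
    ∃ C : ℝ, 0 < C ∧ ∀ α, 0 < α → α ≤ α₀ →
      Real.sqrt (∫ t, t * (α / (t + α)) * (r α t) ^ 2 ∂ν) ≤
        (C / Real.sqrt α) *
          Real.sqrt (∫ t, ((α / (t + α)) * r α t * t) ^ 2 ∂ν) :=
  stmt8_general ν hsupp r hr01 hrmono c₁ c₂ t₀ α₀ hc₂0 hc₂1 ht₀ hα₀ hKN
end
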